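/- For every positive integer n and every real t in [0,1], one has |B_{2n}(t) - B_{2n}| \le (2 - 2^{1-2n}) |B_{2n}|, where B_{2n} is the 2n-th Bernoulli number. -/

import Mathlib

/-!
On `(0, 1/2)` the odd Bernoulli polynomial `B_{2k+1}` has the sign of `(-1)^(k+1)`. By induction:
`B_{2k+3}` vanishes at `0` and `1/2`, and the second derivative of `(-1)^(k+1) B_{2k+3}` is a
positive multiple of `(-1)^(k+1) B_{2k+1} > 0`, so this function is strictly convex on `[0, 1/2]`
and hence negative between its zeros.
Consequently `(-1)^(k+1) B_{2k+2}` is increasing on `[0, 1/2]`, so `|B_{2n}(t) - B_{2n}|` is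
largest at `t = 1/2` on `[0, 1/2]`, hence on `[0, 1]` by the symmetry `B_{2n}(1 - t) = B_{2n}(t)`.
Finally `B_{2n}(1/2) = (2^(1-2n) - 1) B_{2n}`.
-/

open Set Real Filter

noncomputable def B (n : ℕ) (t : ℝ) : ℝ := Polynomial.aeval t (Polynomial.bernoulli n)

noncomputable def Bnum (n : ℕ) : ℝ := ((bernoulli n : ℚ) : ℝ)

lemma B_eq_bernoulliFun (n : ℕ) (t : ℝ) : B n t = bernoulliFun n t := by
  rw [B, bernoulliFun, Polynomial.eval_map, Polynomial.aeval_def]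

lemma bernoulliFun_odd_eval_zero {k : ℕ} (hk : k ≠ 0) : bernoulliFun (2 * k + 1) 0 = 0 := by
  rw [bernoulliFun_eval_zero, bernoulli_eq_zero_of_odd (odd_two_mul_add_one k) (by omega),
    Rat.cast_zero]

lemma strictMonoOn_neg_one_pow_mul_bernoulliFun {k : ℕ} {a b : ℝ}
    (hpos : ∀ t ∈ Ioo a b, 0 < (-1) ^ (k + 1) * bernoulliFun (2 * k + 1) t) :
    StrictMonoOn (fun t ↦ (-1) ^ (k + 1) * bernoulliFun (2 * (k + 1)) t) (Icc a b) := by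
  refine strictMonoOn_of_hasDerivWithinAt_pos (convex_Icc a b) (by fun_prop)
    (f' := fun t ↦ (2 * (k + 1) : ℝ) * ((-1) ^ (k + 1) * bernoulliFun (2 * k + 1) t))
    (fun t _ ↦ ?_) (fun t ht ↦ ?_)
  · refine (((hasDerivAt_bernoulliFun _ t).const_mul ((-1 : ℝ) ^ (k + 1))).congr_deriv
      ?_).hasDerivWithinAt
    rw [show 2 * (k + 1) - 1 = 2 * k + 1 by omega]
    push_cast
    ring
  · rw [interior_Icc] at ht
    exact mul_pos (by positivity) (hpos t ht)

theorem neg_one_pow_mul_bernoulliFun_pos (k : ℕ) {t : ℝ} (ht : t ∈ Ioo (0 : ℝ) 2⁻¹) :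
    0 < (-1) ^ (k + 1) * bernoulliFun (2 * k + 1) t := by
  induction k generalizing t with
  | zero =>
    norm_num
    linarith [ht.2]
  | succ k ih =>
    set g : ℝ → ℝ := fun t ↦ (-1) ^ (k + 1) * bernoulliFun (2 * (k + 1) + 1) t with hg
    have hderiv : deriv g =
        fun t ↦ (2 * (k + 1) + 1 : ℝ) * ((-1) ^ (k + 1) * bernoulliFun (2 * (k + 1)) t) := by
      ext t
      rw [hg, deriv_const_mul_field', deriv_bernoulliFun, Nat.add_sub_cancel]
      push_cast
      ring
    have hconv : StrictConvexOn ℝ (Icc 0 2⁻¹) g := by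
      refine StrictMonoOn.strictConvexOn_of_deriv (convex_Icc _ _) (by fun_prop) ?_
      rw [hderiv, interior_Icc]
      have hmono := strictMonoOn_neg_one_pow_mul_bernoulliFun (a := 0) (b := 2⁻¹) fun t ht ↦ ih ht
      exact fun x hx y hy hxy ↦ mul_lt_mul_of_pos_left
        (hmono (Ioo_subset_Icc_self hx) (Ioo_subset_Icc_self hy) hxy) (by positivity)
    have hg0 : g 0 = 0 := by simp [hg, bernoulliFun_odd_eval_zero]
    have hghalf : g 2⁻¹ = 0 := by simp [hg, bernoulliFun_eval_half_eq_zero]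
    have hneg : g t < 0 := by
      simpa [hg0, hghalf] using hconv.lt_on_openSegment (left_mem_Icc.2 (by norm_num))
        (right_mem_Icc.2 (by norm_num)) (by norm_num)
        (by rwa [openSegment_eq_Ioo (by norm_num)])
    rw [pow_succ]
    linarith

theorem abs_bernoulliFun_sub_bernoulli_le_eval_half (k : ℕ) {t : ℝ} (ht : t ∈ Icc (0 : ℝ) 1) :
    |bernoulliFun (2 * k) t - bernoulli (2 * k)| ≤
      |bernoulliFun (2 * k) 2⁻¹ - bernoulli (2 * k)| := by
  rcases k with _ | k
  · simp
  wlog hle : t ≤ 2⁻¹ generalizing t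
  · have := this (t := 1 - t) ⟨by linarith [ht.2], by linarith [ht.1]⟩ (by linarith)
    rwa [bernoulliFun_eval_one_sub, (even_two_mul _).neg_one_pow, one_mul] at this
  have hmono := strictMonoOn_neg_one_pow_mul_bernoulliFun (a := 0) (b := 2⁻¹)
    fun t ht ↦ neg_one_pow_mul_bernoulliFun_pos k ht
  have hhalf : (2⁻¹ : ℝ) ∈ Icc 0 2⁻¹ := right_mem_Icc.2 (by norm_num)
  have h0 := hmono.monotoneOn (left_mem_Icc.2 (by norm_num)) ⟨ht.1, hle⟩ ht.1
  have h1 := hmono.monotoneOn ⟨ht.1, hle⟩ hhalf hle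
  have hsign (x y : ℝ) : |(-1) ^ (k + 1) * x - (-1) ^ (k + 1) * y| = |x - y| := by
    simp [← mul_sub, abs_mul]
  rw [← bernoulliFun_eval_zero, ← hsign, ← hsign (bernoulliFun _ 2⁻¹),
    abs_of_nonneg (by linarith), abs_of_nonneg (by linarith)]
  linarith

theorem stmt17_general (n : ℕ) (t : ℝ) (ht : t ∈ Icc (0:ℝ) 1) :
    |B (2*n) t - Bnum (2*n)| ≤ (2 - 1/(2:ℝ)^(2*n-1)) * |Bnum (2*n)| := by
  -- an equality for `n ≥ 1`; at `n = 0` the truncated `2 * n - 1` makes it strict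
  have hpow_le : 1 / (2:ℝ) ^ (2 * n - 1) ≤ 2 / 2 ^ (2 * n) := by
    rw [div_le_div_iff₀ (by positivity) (by positivity), one_mul, ← pow_succ']
    exact pow_le_pow_right₀ one_le_two (by omega)
  have hcoeff : 0 ≤ 2 - 2 / (2:ℝ) ^ (2 * n) := by
    rw [sub_nonneg]
    exact div_le_self zero_le_two (one_le_pow₀ one_le_two)
  calc |B (2*n) t - Bnum (2*n)| ≤ |bernoulliFun (2 * n) 2⁻¹ - bernoulli (2 * n)| := by
        rw [B_eq_bernoulliFun, Bnum]
        exact abs_bernoulliFun_sub_bernoulli_le_eval_half n ht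
    _ = (2 - 2 / 2 ^ (2 * n)) * |Bnum (2*n)| := by
        rw [bernoulliFun_eval_half, Bnum, ← abs_of_nonneg hcoeff, ← abs_mul, abs_sub_comm]
        congr 1
        ring
    _ ≤ (2 - 1/(2:ℝ)^(2*n-1)) * |Bnum (2*n)| := by gcongr

theorem stmt17 (n : ℕ) (hn : 1 ≤ n) (t : ℝ) (ht : t ∈ Icc (0:ℝ) 1) :
    |B (2*n) t - Bnum (2*n)| ≤ (2 - 1/(2:ℝ)^(2*n-1)) * |Bnum (2*n)| :=
  stmt17_general n t ht
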